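/- As modular forms (mod p) one has θ^{k'} E_k(χ, ψ) = θ E_{k'}(ψ, χ); that is, E_k(χ, ψ) ∈ M_k(Γ₁(N); 𝔨) and E_{k'}(ψ, χ) ∈ M_{k'}(Γ₁(N); 𝔨) are companions of each other. -/

import Mathlib

set_option synthInstance.maxHeartbeats 1000000
set_option maxHeartbeats 1000000

/-!
Statement 10 (Lemma (3.1.1) of Ohta).  As modular forms (mod `p`),
`θ^{k'} E_k(χ, ψ) = θ E_{k'}(ψ, χ)`, i.e. the two Eisenstein series are companions of
each other.  Here `θ = q d/dq`, `k = d+2`, `k' = p+1-k`, and `E_j(χ,ψ)` is the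
Eisenstein series with `q`-expansion
`δ(ψ)L(1-j,χ) + Σ_{n≥1} (Σ_{0<t∣n} χ(t)ψ(n/t)t^{j-1}) qⁿ`,
reduced mod `ϖ` via the residue map `ρ : 𝔯 → 𝔨`.
-/

/-- The operator `θ = q·d/dq` on `𝔨[[q]]`. -/
noncomputable def thetaOp (𝔨 : Type*) [CommRing 𝔨] : Module.End 𝔨 (PowerSeries 𝔨) where
  toFun f := PowerSeries.mk fun n => (n : 𝔨) * PowerSeries.coeff n f
  map_add' f g := by ext n; simp [mul_add]
  map_smul' c f := by ext n; simp; ring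

/-- The reduction mod `ϖ` of the Eisenstein series `E_j(χ, ψ)`: the power series
`c + Σ_{n≥1} (Σ_{0<t∣n} χ(t)ψ(n/t)t^{j-1}) qⁿ ∈ 𝔨[[q]]`, where the coefficients are
reduced via `ρ : 𝔯 → 𝔨` and `c` is the (reduced) constant term `δ(ψ)L(1-j, χ)`. -/
noncomputable def eisensteinModP {𝔯 𝔨 : Type*} [CommRing 𝔯] [CommRing 𝔨]
    (ρ : 𝔯 →+* 𝔨) (j : ℕ) {a b : ℕ}
    (χ : DirichletCharacter 𝔯 a) (ψ : DirichletCharacter 𝔯 b) (c : 𝔨) :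
    PowerSeries 𝔨 :=
  PowerSeries.mk fun n =>
    if n = 0 then c
    else ρ (∑ t ∈ n.divisors, χ (t : ZMod a) * ψ ((n / t : ℕ) : ZMod b) * (t : 𝔯) ^ (j - 1))


lemma thetaOp_coeff {𝔨 : Type*} [CommRing 𝔨] (n : ℕ) (f : PowerSeries 𝔨) :
    PowerSeries.coeff n (thetaOp 𝔨 f) = (n : 𝔨) * PowerSeries.coeff n f := by
  simp [thetaOp]

lemma thetaOp_pow_coeff {𝔨 : Type*} [CommRing 𝔨] (m n : ℕ) (f : PowerSeries 𝔨) :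
    PowerSeries.coeff n ((thetaOp 𝔨 ^ m) f) = (n : 𝔨) ^ m * PowerSeries.coeff n f := by
  induction m generalizing f with
  | zero => simp
  | succ m ih =>
    rw [pow_succ, Module.End.mul_apply, ih, thetaOp_coeff, pow_succ]
    ring

lemma nat_pow_card {p : ℕ} (hp : p.Prime) {𝔨 : Type*} [CommRing 𝔨] [CharP 𝔨 p] (t : ℕ) :
    (t : 𝔨) ^ p = (t : 𝔨) := by
  haveI : Fact p.Prime := ⟨hp⟩
  calc (t : 𝔨) ^ p = (ZMod.castHom (dvd_refl p) 𝔨 (t : ZMod p)) ^ p := by rw [map_natCast]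
    _ = ZMod.castHom (dvd_refl p) 𝔨 ((t : ZMod p) ^ p) := (map_pow _ _ _).symm
    _ = ZMod.castHom (dvd_refl p) 𝔨 (t : ZMod p) := by rw [ZMod.pow_card]
    _ = (t : 𝔨) := map_natCast _ t

/-- Lemma (3.1.1).  Let `p ≥ 5` be prime, `N` prime to `p`,
`1 ≤ d ≤ p-3`, `k = d+2`, `k' = p+1-k`.  Let `χ`, `ψ` be primitive Dirichlet
characters of conductors `u₀`, `v` with `(χψ)(-1) = (-1)^k` and `u₀v = N`, with values
in the ring of integers `𝔯` of a finite extension of `ℚ_p`, and let `ρ : 𝔯 → 𝔨` be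
the reduction to the residue field.  Then, whatever the (reduced) constant terms
`c`, `c'` of the two Eisenstein series are,
`θ^{k'} E_k(χ, ψ) = θ E_{k'}(ψ, χ)` in `𝔨[[q]]`;
that is, `E_k(χ, ψ)` and `E_{k'}(ψ, χ)` are companions to each other. -/
theorem eisenstein_series_are_companions
    (p N d : ℕ) (hp : p.Prime) (hp5 : 5 ≤ p) (hN : 0 < N) (hNp : Nat.Coprime N p)
    (hd1 : 1 ≤ d) (hd2 : d ≤ p - 3)
    (k k' : ℕ) (hk : k = d + 2) (hk' : k' = p + 1 - k)
    (𝔯 : Type*) [CommRing 𝔯] [IsDomain 𝔯] [IsDiscreteValuationRing 𝔯] [IsLocalRing 𝔯]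
    (𝔨 : Type*) [Field 𝔨] [CharP 𝔨 p] [Finite 𝔨]
    (ρ : 𝔯 →+* 𝔨) (hρ : Function.Surjective ρ)
    (hker : RingHom.ker ρ = IsLocalRing.maximalIdeal 𝔯)
    (u₀ v : ℕ) (hu₀v : u₀ * v = N)
    (χ : DirichletCharacter 𝔯 u₀) (ψ : DirichletCharacter 𝔯 v)
    (hχ : χ.IsPrimitive) (hψ : ψ.IsPrimitive)
    (hparity : χ (-1 : ZMod u₀) * ψ (-1 : ZMod v) = (-1 : 𝔯) ^ k)
    (c c' : 𝔨) :
    (thetaOp 𝔨 ^ k') (eisensteinModP ρ k χ ψ c)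
      = thetaOp 𝔨 (eisensteinModP ρ k' ψ χ c') := by
  have hkle : k ≤ p - 1 := by omega
  have hk'1 : 1 ≤ k' := by omega
  ext n
  rw [thetaOp_pow_coeff, thetaOp_coeff]
  rcases eq_or_ne n 0 with rfl | hn
  · simp [hk'1, zero_pow (by omega : k' ≠ 0)]
  · simp only [eisensteinModP, PowerSeries.coeff_mk, if_neg hn]
    rw [show (∑ t ∈ n.divisors, ψ (t : ZMod v) * χ ((n / t : ℕ) : ZMod u₀) * (t : 𝔯) ^ (k' - 1))
        = ∑ t ∈ n.divisors, ψ ((n / t : ℕ) : ZMod v) * χ ((n / (n / t) : ℕ) : ZMod u₀)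
            * ((n / t : ℕ) : 𝔯) ^ (k' - 1) from
      (Nat.sum_div_divisors n fun t => ψ (t : ZMod v) * χ ((n / t : ℕ) : ZMod u₀)
        * (t : 𝔯) ^ (k' - 1)).symm]
    rw [map_sum, map_sum, Finset.mul_sum, Finset.mul_sum]
    refine Finset.sum_congr rfl fun t ht => ?_
    obtain ⟨ht1, hn0⟩ := Nat.mem_divisors.mp ht
    rw [Nat.div_div_self ht1 hn0]
    obtain ⟨m, rfl⟩ := ht1
    have ht0 : t ≠ 0 := fun h => hn0 (by simp [h])
    have hm : t * m / t = m := Nat.mul_div_cancel_left m (Nat.pos_of_ne_zero ht0)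
    rw [hm]
    simp only [map_mul, map_pow, map_natCast]
    have key : ((t * m : ℕ) : 𝔨) ^ k' * (t : 𝔨) ^ (k - 1)
        = ((t * m : ℕ) : 𝔨) * (m : 𝔨) ^ (k' - 1) := by
      push_cast
      rw [mul_pow]
      have hkk : k' + (k - 1) = p := by omega
      have h1 : (t : 𝔨) ^ k' * (m : 𝔨) ^ k' * (t : 𝔨) ^ (k - 1)
          = (t : 𝔨) ^ p * (m : 𝔨) ^ k' := by rw [← hkk, pow_add]; ring
      rw [h1, nat_pow_card hp]
      have h2 : (m : 𝔨) ^ k' = (m : 𝔨) * (m : 𝔨) ^ (k' - 1) := by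
        conv_lhs => rw [show k' = 1 + (k' - 1) by omega, pow_add, pow_one]
      rw [h2]; ring
    calc ((t * m : ℕ) : 𝔨) ^ k' * (ρ (χ (t : ZMod u₀)) * ρ (ψ ((m : ℕ) : ZMod v)) * (t : 𝔨) ^ (k - 1))
        = (((t * m : ℕ) : 𝔨) ^ k' * (t : 𝔨) ^ (k - 1)) * (ρ (χ (t : ZMod u₀)) * ρ (ψ ((m : ℕ) : ZMod v))) := by ring
      _ = (((t * m : ℕ) : 𝔨) * (m : 𝔨) ^ (k' - 1)) * (ρ (χ (t : ZMod u₀)) * ρ (ψ ((m : ℕ) : ZMod v))) := by rw [key]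
      _ = ((t * m : ℕ) : 𝔨) * (ρ (ψ ((m : ℕ) : ZMod v)) * ρ (χ (t : ZMod u₀)) * (m : 𝔨) ^ (k' - 1)) := by ring
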